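/- arXiv:2312.12761 — 4 statements merged into one kernel-verified Lean document; each statement's English description precedes it below -/
import Mathlib

section
/- For all x, y ∈ ℂ, the cubic polynomial p(w) = 2(w² − 1)(w − x) − y² in ℂ[w] has a repeated root (that is, there exists w₀ ∈ ℂ with p(w₀) = 0 and p'(w₀) = 0) if and only if (27/4)y⁴ + 2xy²(x² − 9) − 4(x² − 1)² = 0. -/
/-- Discriminant computation for the complexified spherical pendulum: the cubic
`p(w) = 2 (w² − 1)(w − x) − y²` has a repeated root iff
`(27/4) y⁴ + 2 x y² (x² − 9) − 4 (x² − 1)² = 0`. -/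
theorem pendulum_cubic_repeated_root_iff (x y : ℂ) :
    (∃ w₀ : ℂ, 2 * (w₀ ^ 2 - 1) * (w₀ - x) - y ^ 2 = 0 ∧
        deriv (fun w : ℂ => 2 * (w ^ 2 - 1) * (w - x) - y ^ 2) w₀ = 0) ↔
      (27 / 4) * y ^ 4 + 2 * x * y ^ 2 * (x ^ 2 - 9) - 4 * (x ^ 2 - 1) ^ 2 = 0 := by
  have hderiv : ∀ w₀ : ℂ,
      deriv (fun w : ℂ => 2 * (w ^ 2 - 1) * (w - x) - y ^ 2) w₀
        = 6 * w₀ ^ 2 - 4 * x * w₀ - 2 := by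
    intro w₀
    have h : HasDerivAt (fun w : ℂ => 2 * (w ^ 2 - 1) * (w - x) - y ^ 2)
        (6 * w₀ ^ 2 - 4 * x * w₀ - 2) w₀ := by
      have h1 : HasDerivAt (fun w : ℂ => 2 * (w ^ 2 - 1)) (2 * (2 * w₀)) w₀ := by
        simpa using ((hasDerivAt_pow 2 w₀).sub_const 1).const_mul 2
      have h2 : HasDerivAt (fun w : ℂ => w - x) 1 w₀ := (hasDerivAt_id w₀).sub_const x
      have := (h1.mul h2).sub_const (y ^ 2)
      exact this.congr_deriv (by ring)
    exact h.deriv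
  constructor
  · rintro ⟨w₀, h1, h2⟩
    rw [hderiv w₀] at h2
    linear_combination
      (-(243 * (-(4:ℂ)/9 * (x^2+3) * w₀ + (16*x - 9*y^2)/9) + 72*x*(x^2+3)
          - 54*(16*x - 9*y^2)) / 36) * h1 +
      ((8*(x^2+3)^2 + (243 * (-(4:ℂ)/9 * (x^2+3) * w₀ + (16*x - 9*y^2)/9)
          + 72*x*(x^2+3) - 54*(16*x - 9*y^2)) * (w₀/3 - x/9)) / 36) * h2
  · intro hD
    obtain ⟨s, hs⟩ := IsAlgClosed.exists_pow_nat_eq (x ^ 2 + 3) (n := 2) two_pos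
    have key : (4*x^3 - 36*x + 27*y^2 - 4*s^3) * (4*x^3 - 36*x + 27*y^2 + 4*s^3) = 0 := by
      linear_combination 108 * hD + (-16*s^4 - 16*s^2*(x^2+3) - 16*(x^2+3)^2) * hs
    rcases mul_eq_zero.mp key with h | h
    · -- 4x³ - 36x + 27y² = 4s³ ; take w₀ = (x - s)/3
      refine ⟨(x - s) / 3, ?_, ?_⟩
      · linear_combination (-1/27 : ℂ) * h +
          ((4:ℂ)/27*s - 8/27*x + 8/27*x - 10/27*s) * hs
      · rw [hderiv]
        linear_combination (2/3 : ℂ) * hs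
    · -- 4x³ - 36x + 27y² = -4s³ ; take w₀ = (x + s)/3
      refine ⟨(x + s) / 3, ?_, ?_⟩
      · linear_combination (-1/27 : ℂ) * h +
          (-(4:ℂ)/27*s - 8/27*x + 8/27*x + 10/27*s) * hs
      · rw [hderiv]
        linear_combination (2/3 : ℂ) * hs
end

section
/- Let x, y ∈ ℂ satisfy (27/4)y⁴ + 2xy²(x² − 9) − 4(x² − 1)² ≠ 0. Then the affine curve {(w,z) ∈ ℂ² : z² = 2(w² − 1)(w − x) − y²} is nonsingular: there is no point (w,z) on the curve at which simultaneously z = 0 and the derivative of w ↦ 2(w² − 1)(w − x) − y² vanishes. -/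
/-- If `(27/4) y⁴ + 2 x y² (x² − 9) − 4 (x² − 1)² ≠ 0`, then the affine curve
`z² = 2 (w² − 1)(w − x) − y²` is nonsingular: no point of the curve has both
`z = 0` and vanishing derivative of `w ↦ 2 (w² − 1)(w − x) − y²`. -/
theorem pendulum_fiber_nonsingular (x y : ℂ)
    (h : (27 / 4) * y ^ 4 + 2 * x * y ^ 2 * (x ^ 2 - 9) - 4 * (x ^ 2 - 1) ^ 2 ≠ 0) :
    ∀ w z : ℂ, z ^ 2 = 2 * (w ^ 2 - 1) * (w - x) - y ^ 2 →
      ¬ (z = 0 ∧ deriv (fun w : ℂ => 2 * (w ^ 2 - 1) * (w - x) - y ^ 2) w = 0) := by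
  rintro w z hcurve ⟨hz, hd⟩
  apply h
  have hc : 2 * (w ^ 2 - 1) * (w - x) - y ^ 2 = 0 := by rw [← hcurve, hz]; ring
  have hder : HasDerivAt (fun w : ℂ => 2 * (w ^ 2 - 1) * (w - x) - y ^ 2)
      ((2 * (2 * w ^ (2 - 1))) * (w - x) + (2 * (w ^ 2 - 1)) * 1) w :=
    ((((hasDerivAt_pow 2 w).sub_const 1).const_mul 2).mul
      ((hasDerivAt_id w).sub_const x)).sub_const (y ^ 2)
  rw [hder.deriv] at hd
  linear_combination ((9*w^4 - 12*x*w^3 + x^2*w^2 - 15*w^2 + 2*x^3*w + 10*x*w + x^2 + 4)/2) * hd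
    - ((27/4) * (y^2 + 2*(w^2-1)*(w-x)) + 2*x*(x^2-9)) * hc
end

section
/- The polynomial (27/4)y⁴ + 2xy²(x² − 9) − 4(x² − 1)² is irreducible in the polynomial ring ℂ[x,y]. -/
section Helpers
open Polynomial

variable {F : Type*} [Field F]

lemma monic_deg_one_form {u : F[X]} (hm : u.Monic) (h : u.natDegree = 1) :
    u = X + C (u.coeff 0) := by
  have hl := hm.leadingCoeff
  rw [leadingCoeff, h] at hl
  ext n
  rcases Nat.lt_or_ge n 2 with hn | hn
  · interval_cases n <;> simp [hl]
  · rw [u.coeff_eq_zero_of_natDegree_lt (by omega)]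
    simp [Polynomial.coeff_X, coeff_C, show ¬(1 = n) by omega, show ¬(n = 0) by omega]

lemma monic_deg_two_form {u : F[X]} (hm : u.Monic) (h : u.natDegree = 2) :
    u = X ^ 2 + C (u.coeff 1) * X + C (u.coeff 0) := by
  have hl := hm.leadingCoeff
  rw [leadingCoeff, h] at hl
  ext n
  rcases Nat.lt_or_ge n 3 with hn | hn
  · interval_cases n <;> simp [hl, coeff_X_pow]
  · rw [u.coeff_eq_zero_of_natDegree_lt (by omega)]
    simp [Polynomial.coeff_X, coeff_C, coeff_X_pow,
      show ¬(n = 2) by omega, show ¬(1 = n) by omega, show ¬(n = 0) by omega]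

lemma biquadratic_irreducible (P Q β : F) (hQ : β ^ 2 = Q)
    (h1 : ∀ s : F, s ^ 2 ≠ P ^ 2 - 4 * Q)
    (h2 : ∀ s : F, s ^ 2 ≠ 2 * β - P)
    (h3 : ∀ s : F, s ^ 2 ≠ -(2 * β) - P) :
    Irreducible (X ^ 4 + C P * X ^ 2 + C Q : F[X]) := by
  set G : F[X] := X ^ 4 + C P * X ^ 2 + C Q with hG
  have hmG : G.Monic := by
    have h' : G = X ^ 4 + (C P * X ^ 2 + C Q) := by rw [hG]; ring
    rw [h']
    apply Polynomial.monic_X_pow_add (n := 4)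
    apply lt_of_le_of_lt (degree_add_le _ _)
    apply max_lt
    · apply lt_of_le_of_lt (degree_mul_le _ _)
      calc degree (C P) + degree (X ^ 2 : F[X]) ≤ 0 + 2 :=
            add_le_add degree_C_le (by simp [degree_X_pow])
        _ < 4 := by norm_num
    · exact lt_of_le_of_lt degree_C_le (by norm_num)
  have hdG : G.natDegree = 4 := by rw [hG]; compute_degree!
  have key : ∀ u v : F[X], u.Monic → G = u * v → u.natDegree ≠ 1 ∧ u.natDegree ≠ 2 := by
    intro u v hu huv
    have hv : v.Monic := hu.of_mul_monic_left (huv ▸ hmG)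
    constructor
    · intro hd1
      have hform := monic_deg_one_form hu hd1
      set r : F := -u.coeff 0 with hr
      have hroot : G.eval r = 0 := by
        rw [huv, eval_mul, hform]
        simp [hr]
      rw [hG] at hroot
      simp only [eval_add, eval_mul, eval_pow, eval_X, eval_C] at hroot
      exact h1 (2 * r ^ 2 + P) (by linear_combination 4 * hroot)
    · intro hd2
      have hdv : v.natDegree = 2 := by
        have := natDegree_mul hu.ne_zero hv.ne_zero
        rw [← huv, hdG, hd2] at this
        omega
      have hfu := monic_deg_two_form hu hd2
      have hfv := monic_deg_two_form hv hdv
      set a := u.coeff 1; set b := u.coeff 0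
      set c := v.coeff 1; set d := v.coeff 0
      have hexp : u * v = X ^ 4 + C (a + c) * X ^ 3 + C (b + d + a * c) * X ^ 2
          + C (a * d + b * c) * X + C (b * d) := by
        rw [hfu, hfv]; simp only [C_add, C_mul]; ring
      rw [hG, hexp] at huv
      have e3 : a + c = 0 := by
        have h' := congrArg (fun f => Polynomial.coeff f 3) huv
        simp only [coeff_add, coeff_C_mul, coeff_X_pow, coeff_C, coeff_X] at h'
        norm_num at h'
        linear_combination -h'
      have e2 : b + d + a * c = P := by
        have h' := congrArg (fun f => Polynomial.coeff f 2) huv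
        simp only [coeff_add, coeff_C_mul, coeff_X_pow, coeff_C, coeff_X] at h'
        norm_num at h'
        linear_combination -h'
      have e1 : a * d + b * c = 0 := by
        have h' := congrArg (fun f => Polynomial.coeff f 1) huv
        simp only [coeff_add, coeff_C_mul, coeff_X_pow, coeff_C, coeff_X] at h'
        norm_num at h'
        linear_combination -h'
      have e0 : b * d = Q := by
        have h' := congrArg (fun f => Polynomial.coeff f 0) huv
        simp only [coeff_add, coeff_C_mul, coeff_X_pow, coeff_C, coeff_X] at h'
        norm_num at h'
        linear_combination -h'
      have hsplit : a * (d - b) = 0 := by linear_combination e1 - b * e3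
      rcases mul_eq_zero.mp hsplit with ha | hdb
      · have hP : P = b + d := by linear_combination -e2 + c * ha
        have hQ' : Q = b * d := by linear_combination -e0
        exact h1 (b - d) (by rw [hP, hQ']; ring)
      · have hd' : d = b := by linear_combination hdb
        have hc : c = -a := by linear_combination e3
        have hbb : (b - β) * (b + β) = 0 := by linear_combination e0 - hQ - b * hdb
        have ha2 : a ^ 2 = 2 * b - P := by linear_combination -e2 + a * hc + hdb
        rcases mul_eq_zero.mp hbb with hb1 | hb2
        · have hbβ : b = β := by linear_combination hb1
          exact h2 a (by linear_combination ha2 + 2 * hbβ)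
        · have hbβ : b = -β := by linear_combination hb2
          exact h3 a (by linear_combination ha2 + 2 * hbβ)
  by_contra hirr
  have hnu : ¬IsUnit G := by
    intro h
    rw [Polynomial.isUnit_iff_degree_eq_zero] at h
    rw [degree_eq_natDegree hmG.ne_zero, hdG] at h
    exact absurd h (by norm_num)
  rw [irreducible_iff] at hirr
  push_neg at hirr
  obtain ⟨w, z, hwz, hw, hz⟩ := hirr hnu
  have hw0 : w ≠ 0 := by rintro rfl; exact hmG.ne_zero (by simpa using hwz)
  have hz0 : z ≠ 0 := by rintro rfl; exact hmG.ne_zero (by simpa using hwz)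
  have hsum : w.natDegree + z.natDegree = 4 := by
    rw [← natDegree_mul hw0 hz0, ← hwz, hdG]
  have hwpos : 1 ≤ w.natDegree := by
    by_contra h
    push_neg at h
    apply hw
    rw [Polynomial.isUnit_iff_degree_eq_zero, degree_eq_natDegree hw0]
    interval_cases hwd : w.natDegree
    · rfl
  have hzpos : 1 ≤ z.natDegree := by
    by_contra h
    push_neg at h
    apply hz
    rw [Polynomial.isUnit_iff_degree_eq_zero, degree_eq_natDegree hz0]
    interval_cases hzd : z.natDegree
    · rfl
  have main : ∀ w z : F[X], G = w * z → w ≠ 0 → z ≠ 0 →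
      (w.natDegree = 1 ∨ w.natDegree = 2) → False := by
    intro w z hwz hw0 hz0 hdw
    set u := w * C (w.leadingCoeff)⁻¹ with hu_def
    have hum : u.Monic := monic_mul_leadingCoeff_inv hw0
    have hud : u.natDegree = w.natDegree := natDegree_mul_leadingCoeff_inv w hw0
    have hG' : G = u * (C w.leadingCoeff * z) := by
      rw [hu_def]
      have hlc : (w.leadingCoeff)⁻¹ * w.leadingCoeff = 1 :=
        inv_mul_cancel₀ (leadingCoeff_ne_zero.mpr hw0)
      calc G = w * z := hwz
        _ = w * C ((w.leadingCoeff)⁻¹ * w.leadingCoeff) * z := by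
            rw [hlc, C_1, mul_one]
        _ = w * C (w.leadingCoeff)⁻¹ * (C w.leadingCoeff * z) := by
            rw [C_mul]; ring
    have hk := key u _ hum hG'
    rcases hdw with h | h
    · exact hk.1 (by rw [hud, h])
    · exact hk.2 (by rw [hud, h])
  rcases le_or_gt w.natDegree 2 with hle | hlt
  · exact main w z hwz hw0 hz0 (by omega)
  · exact main z w (by rw [hwz, mul_comm]) hz0 hw0 (by omega)


noncomputable section

local notation "𝔸" => Polynomial ℂ
local notation "𝕂" => RatFunc ℂ



lemma sq_descend (s : 𝕂) (c : 𝔸) (h : s ^ 2 = algebraMap 𝔸 𝕂 c) :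
    ∃ a : 𝔸, a ^ 2 = c := by
  have hint : IsIntegral 𝔸 s := by
    refine ⟨X ^ 2 - C c, ?_, ?_⟩
    · exact monic_X_pow_sub_C c two_ne_zero
    · simp [eval₂_sub, eval₂_pow, h]
  obtain ⟨a, ha⟩ := IsIntegrallyClosed.isIntegral_iff.mp hint
  refine ⟨a, IsFractionRing.injective 𝔸 𝕂 ?_⟩
  rw [map_pow, ha, h]

lemma not_sq_cube (a : 𝔸) : a ^ 2 ≠ ((X : 𝔸) ^ 2 + 3) ^ 3 := by
  intro h
  set r : ℂ := Complex.I * (Real.sqrt 3 : ℂ) with hrdef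
  have hr2 : r ^ 2 = -3 := by
    rw [hrdef, mul_pow, Complex.I_sq, ← Complex.ofReal_pow,
      Real.sq_sqrt (by norm_num : (3:ℝ) ≥ 0)]
    norm_num
  have hr0 : r ≠ 0 := by
    intro h0
    rw [h0] at hr2
    norm_num at hr2
  have hfact : (X : 𝔸) ^ 2 + 3 = (X - C r) * (X + C r) := by
    have h1 : (X - C r) * (X + C r) = X ^ 2 - C (r ^ 2) := by
      rw [map_pow]; ring
    rw [h1, hr2, map_neg, (map_ofNat (Polynomial.C : ℂ →+* 𝔸) 3).symm]
    ring
  have hX0 : ((X : 𝔸) ^ 2 + 3) ≠ 0 := by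
    intro hh
    have := congrArg (fun p => Polynomial.coeff p 2) hh
    simp [coeff_X_pow] at this
  have ha0 : a ≠ 0 := by
    rintro rfl
    exact pow_ne_zero 3 hX0 (by simpa using h.symm)
  have hm1 : rootMultiplicity r ((X : 𝔸) ^ 2 + 3) = 1 := by
    rw [hfact, rootMultiplicity_mul (by rw [← hfact]; exact hX0)]
    rw [rootMultiplicity_X_sub_C_self]
    rw [rootMultiplicity_eq_zero (by simp [IsRoot, eval_add, hr0, two_ne_zero]
      : ¬IsRoot (X + C r) r)]
  have hL : rootMultiplicity r (a ^ 2) = 2 * rootMultiplicity r a := by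
    rw [pow_two, rootMultiplicity_mul (by exact mul_ne_zero ha0 ha0)]
    ring
  have hR : rootMultiplicity r (((X : 𝔸) ^ 2 + 3) ^ 3) = 3 := by
    have hne : ((X : 𝔸) ^ 2 + 3) * (((X : 𝔸) ^ 2 + 3) * ((X : 𝔸) ^ 2 + 3)) ≠ 0 :=
      mul_ne_zero hX0 (mul_ne_zero hX0 hX0)
    rw [pow_succ, pow_two, mul_comm]
    rw [rootMultiplicity_mul (by rw [mul_comm] at hne ⊢; simpa [mul_assoc] using hne)]
    rw [rootMultiplicity_mul (mul_ne_zero hX0 hX0)]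
    omega
  rw [h, hR] at hL
  omega

lemma odd_deg_not_sq (c : 𝔸) (hc : c.natDegree = 3) (a : 𝔸) : a ^ 2 ≠ c := by
  intro h
  have ha0 : a ≠ 0 := by
    rintro rfl
    rw [← h] at hc
    simp at hc
  have : (a ^ 2).natDegree = 2 * a.natDegree :=
    natDegree_pow' (pow_ne_zero 2 (leadingCoeff_ne_zero.mpr ha0))
  rw [h, hc] at this
  omega








noncomputable instance : CharZero (RatFunc ℂ) := by
  have h : Function.Injective (algebraMap (Polynomial ℂ) (RatFunc ℂ)) :=
    IsFractionRing.injective _ _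
  exact charZero_of_injective_algebraMap h

abbrev ξ : 𝕂 := algebraMap 𝔸 𝕂 X

lemma fA_irreducible :
    Irreducible (C (C ((27:ℂ)/4)) * X ^ 4 + C (2 * X * ((X:𝔸) ^ 2 - 9)) * X ^ 2
      + C (-4 * ((X:𝔸) ^ 2 - 1) ^ 2) : (Polynomial 𝔸)) := by
  set cb : 𝔸 := 2 * X * ((X:𝔸) ^ 2 - 9) with hcb
  set cc : 𝔸 := -4 * ((X:𝔸) ^ 2 - 1) ^ 2 with hcc
  set fA : Polynomial 𝔸 := C (C ((27:ℂ)/4)) * X ^ 4 + C cb * X ^ 2 + C cc with hfA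
  have hcoeff4 : fA.coeff 4 = C ((27:ℂ)/4) := by
    rw [hfA]
    have h1 : cb.natDegree ≤ 3 := by rw [hcb]; compute_degree
    have h2 : cc.natDegree ≤ 4 := by rw [hcc]; compute_degree
    simp [coeff_add, coeff_C_mul, coeff_X_pow, coeff_C]
  have hprim : fA.IsPrimitive := by
    intro r hr
    have hdvd : r ∣ C ((27:ℂ)/4) := by
      rw [← hcoeff4]
      exact (C_dvd_iff_dvd_coeff r fA).mp hr 4
    exact isUnit_of_dvd_unit hdvd (Polynomial.isUnit_C.mpr (by norm_num : ((27:ℂ)/4) ≠ 0).isUnit)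
  rw [IsPrimitive.irreducible_iff_irreducible_map_fraction_map (K := RatFunc ℂ) hprim]
  set μ : ℂ := 4 * (Real.sqrt 3 : ℂ) * Complex.I / 9 with hμ
  have hμ2 : μ ^ 2 = -16/27 := by
    rw [hμ]
    have h3 : ((Real.sqrt 3 : ℂ)) ^ 2 = 3 := by
      rw [← Complex.ofReal_pow, Real.sq_sqrt (by norm_num : (3:ℝ) ≥ 0)]
      norm_num
    rw [div_pow, mul_pow, mul_pow, Complex.I_sq, h3]
    norm_num
  set P : 𝕂 := (8/27 : 𝕂) * (ξ^3 - 9*ξ) with hP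
  set Q : 𝕂 := (-16/27 : 𝕂) * (ξ^2 - 1)^2 with hQdef
  set m : 𝕂 := algebraMap 𝔸 𝕂 (C μ) with hm
  set β : 𝕂 := m * (ξ^2 - 1) with hβ
  have hrcμ2 : m^2 = -16/27 := by
    rw [hm, ← map_pow, ← map_pow, hμ2]
    simp [map_div₀, map_neg, map_ofNat]
  have hQβ : β ^ 2 = Q := by
    rw [hβ, hQdef, mul_pow, hrcμ2]
  have h1 : ∀ s : 𝕂, s ^ 2 ≠ P ^ 2 - 4 * Q := by
    intro s hs
    have key : ((27/8 : 𝕂) * s) ^ 2 = algebraMap 𝔸 𝕂 (((X:𝔸)^2 + 3)^3) := by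
      push_cast [map_pow, map_add, map_ofNat]
      rw [mul_pow, hs, hP, hQdef]
      field_simp
      ring
    obtain ⟨a, ha⟩ := sq_descend _ _ key
    exact not_sq_cube a ha
  have e1 : algebraMap 𝔸 𝕂 (C ((8:ℂ)/27)) = (8/27 : 𝕂) := by
    rw [show algebraMap 𝔸 𝕂 (C ((8:ℂ)/27))
        = ((algebraMap 𝔸 𝕂).comp (C : ℂ →+* 𝔸)) ((8:ℂ)/27) from rfl,
      map_div₀, map_ofNat, map_ofNat]
  have e2 : algebraMap 𝔸 𝕂 (C ((8:ℂ)/3)) = (8/3 : 𝕂) := by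
    rw [show algebraMap 𝔸 𝕂 (C ((8:ℂ)/3))
        = ((algebraMap 𝔸 𝕂).comp (C : ℂ →+* 𝔸)) ((8:ℂ)/3) from rfl,
      map_div₀, map_ofNat, map_ofNat]
  have h2 : ∀ s : 𝕂, s ^ 2 ≠ 2 * β - P := by
    intro s hs
    set c1 : 𝔸 := -(C ((8:ℂ)/27) * X^3) + C (2*μ) * X^2 + C ((8:ℂ)/3) * X - C (2*μ) with hc1
    have hdeg : c1.natDegree = 3 := by rw [hc1]; compute_degree!
    have hkey : s ^ 2 = algebraMap 𝔸 𝕂 c1 := by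
      have hmapc : algebraMap 𝔸 𝕂 c1
          = -((8/27 : 𝕂)*ξ^3) + 2*m*ξ^2 + (8/3 : 𝕂)*ξ - 2*m := by
        rw [hc1, hm]
        simp only [map_add, map_sub, map_mul, map_pow, map_neg, map_ofNat]
        rw [e1, e2]
      rw [hs, hmapc, hβ, hP]
      ring
    obtain ⟨a, ha⟩ := sq_descend _ _ hkey
    exact odd_deg_not_sq c1 hdeg a ha
  have h3 : ∀ s : 𝕂, s ^ 2 ≠ -(2 * β) - P := by
    intro s hs
    set c1 : 𝔸 := -(C ((8:ℂ)/27) * X^3) - C (2*μ) * X^2 + C ((8:ℂ)/3) * X + C (2*μ) with hc1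
    have hdeg : c1.natDegree = 3 := by rw [hc1]; compute_degree!
    have hkey : s ^ 2 = algebraMap 𝔸 𝕂 c1 := by
      have hmapc : algebraMap 𝔸 𝕂 c1
          = -((8/27 : 𝕂)*ξ^3) - 2*m*ξ^2 + (8/3 : 𝕂)*ξ + 2*m := by
        rw [hc1, hm]
        simp only [map_add, map_sub, map_mul, map_pow, map_neg, map_ofNat]
        rw [e1, e2]
      rw [hs, hmapc, hβ, hP]
      ring
    obtain ⟨a, ha⟩ := sq_descend _ _ hkey
    exact odd_deg_not_sq c1 hdeg a ha
  have hGirr := biquadratic_irreducible P Q β hQβ h1 h2 h3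
  have hu4 : algebraMap 𝔸 𝕂 (C ((27:ℂ)/4)) = (27/4 : 𝕂) := by
    rw [show algebraMap 𝔸 𝕂 (C ((27:ℂ)/4))
        = ((algebraMap 𝔸 𝕂).comp (C : ℂ →+* 𝔸)) ((27:ℂ)/4) from rfl,
      map_div₀, map_ofNat, map_ofNat]
  have hmap : fA.map (algebraMap 𝔸 𝕂)
      = C ((27/4 : 𝕂)) * (X ^ 4 + C P * X ^ 2 + C Q) := by
    rw [hfA]
    simp only [Polynomial.map_add, Polynomial.map_mul, Polynomial.map_pow, map_C, map_X]
    rw [hu4]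
    have hb : algebraMap 𝔸 𝕂 cb = (27/4 : 𝕂) * P := by
      rw [hcb, hP]
      simp only [map_mul, map_sub, map_pow, map_ofNat]
      field_simp
      ring
    have hc : algebraMap 𝔸 𝕂 cc = (27/4 : 𝕂) * Q := by
      rw [hcc, hQdef]
      simp only [map_mul, map_sub, map_pow, map_neg, map_ofNat, map_one]
      field_simp
      ring
    rw [hb, hc]
    simp only [C_mul]
    ring
  rw [hmap]
  refine (irreducible_isUnit_mul ?_).mpr hGirr
  exact Polynomial.isUnit_C.mpr (by norm_num : ((27:𝕂)/4) ≠ 0).isUnit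


end
end Helpers

section Main
open MvPolynomial
noncomputable section



def e2 : MvPolynomial (Fin 1) ℂ ≃ₐ[ℂ] Polynomial ℂ :=
  (MvPolynomial.finSuccEquiv ℂ 0).trans
    (Polynomial.mapAlgEquiv (MvPolynomial.isEmptyAlgEquiv ℂ (Fin 0)))

def e : MvPolynomial (Fin 2) ℂ ≃ₐ[ℂ] Polynomial (Polynomial ℂ) :=
  (MvPolynomial.renameEquiv ℂ (Equiv.swap 0 1)).trans
    ((MvPolynomial.finSuccEquiv ℂ 1).trans (Polynomial.mapAlgEquiv e2))

lemma e_X1 : e (X 1) = Polynomial.X := by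
  simp [e, e2, MvPolynomial.renameEquiv_apply, MvPolynomial.rename_X, Equiv.swap_apply_right,
    MvPolynomial.finSuccEquiv_X_zero, Polynomial.map_X]

lemma e_X0 : e (X 0) = Polynomial.C Polynomial.X := by
  have h2 : ((0:Fin 1).succ) = (1 : Fin 2) := by decide
  have hstep : e (X 0) = Polynomial.mapAlgEquiv e2
      (MvPolynomial.finSuccEquiv ℂ 1 (X ((0:Fin 1).succ))) := by
    rw [h2]
    simp [e, MvPolynomial.renameEquiv_apply, MvPolynomial.rename_X, Equiv.swap_apply_left]
  rw [hstep, MvPolynomial.finSuccEquiv_X_succ]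
  simp [e2, Polynomial.map_C, MvPolynomial.finSuccEquiv_X_zero, Polynomial.map_X]

lemma e_C (c : ℂ) : e (C c) = Polynomial.C (Polynomial.C c) := by
  rw [show (C c : MvPolynomial (Fin 2) ℂ) = algebraMap ℂ _ c from rfl, AlgEquiv.commutes]
  rw [show algebraMap ℂ (Polynomial (Polynomial ℂ)) c
      = Polynomial.C (algebraMap ℂ (Polynomial ℂ) c) from rfl]
  rw [show algebraMap ℂ (Polynomial ℂ) c = Polynomial.C c from rfl]

/-- The polynomial `(27/4) y⁴ + 2 x y² (x² − 9) − 4 (x² − 1)²`, defining the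
singular-value curve of the complexified spherical pendulum, is irreducible
in ℂ[x, y]. -/
theorem pendulum_curve_irreducible :
    Irreducible
      (C (27 / 4 : ℂ) * (X 1 : MvPolynomial (Fin 2) ℂ) ^ 4
        + 2 * X 0 * X 1 ^ 2 * (X 0 ^ 2 - 9) - 4 * (X 0 ^ 2 - 1) ^ 2) := by
  rw [← MulEquiv.irreducible_iff (e : MvPolynomial (Fin 2) ℂ ≃ₐ[ℂ] Polynomial (Polynomial ℂ))]
  have himg : e (C (27 / 4 : ℂ) * (X 1 : MvPolynomial (Fin 2) ℂ) ^ 4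
        + 2 * X 0 * X 1 ^ 2 * (X 0 ^ 2 - 9) - 4 * (X 0 ^ 2 - 1) ^ 2)
      = Polynomial.C (Polynomial.C ((27:ℂ)/4)) * Polynomial.X ^ 4
      + Polynomial.C (2 * Polynomial.X * ((Polynomial.X : Polynomial ℂ) ^ 2 - 9)) * Polynomial.X ^ 2
      + Polynomial.C (-4 * ((Polynomial.X : Polynomial ℂ) ^ 2 - 1) ^ 2) := by
    simp only [map_sub, map_add, map_mul, map_pow, map_ofNat, map_one, e_X0, e_X1, e_C]
    simp only [Polynomial.C_mul, Polynomial.C_sub, Polynomial.C_pow, Polynomial.C_neg,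
      map_ofNat, map_one]
    ring
  rw [himg]
  exact fA_irreducible


end
end Main
end

section
/- Let x, y ∈ ℂ with y ≠ 0 and 1 + 2x²y ≠ 0. Then the affine curve {(w,z) ∈ ℂ² : 2yw² + 2w = z² + 2√(−1)·x·z} (with the subspace topology from ℂ²) is homeomorphic to ℂ \ {0}. -/
/-- Step 1: completing the square (a translation of the plane). -/
noncomputable def keplerStep1 (x y : ℂ) (hy : y ≠ 0) :
    {p : ℂ × ℂ // 2 * y * p.1 ^ 2 + 2 * p.1 = p.2 ^ 2 + 2 * Complex.I * x * p.2} ≃ₜ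
    {p : ℂ × ℂ // 2 * y * p.1 ^ 2 - p.2 ^ 2 = x ^ 2 + 1 / (2 * y)} where
  toFun p := ⟨(p.1.1 + 1 / (2 * y), p.1.2 + Complex.I * x), by
    have hp := p.2
    have hI : Complex.I ^ 2 = -1 := Complex.I_sq
    have h2y : (2 : ℂ) * y ≠ 0 := mul_ne_zero two_ne_zero hy
    field_simp
    ring_nf
    linear_combination 2 * y * hp - 2 * y * x ^ 2 * hI⟩
  invFun p := ⟨(p.1.1 - 1 / (2 * y), p.1.2 - Complex.I * x), by
    have hp := p.2
    have hI : Complex.I ^ 2 = -1 := Complex.I_sq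
    have h2y : (2 : ℂ) * y ≠ 0 := mul_ne_zero two_ne_zero hy
    field_simp at hp ⊢
    ring_nf at hp ⊢
    linear_combination hp + 2 * y * x ^ 2 * hI⟩
  left_inv p := by ext <;> simp
  right_inv p := by ext <;> simp
  continuous_toFun := by
    apply Continuous.subtype_mk
    exact ((continuous_fst.comp continuous_subtype_val).add continuous_const).prodMk
      ((continuous_snd.comp continuous_subtype_val).add continuous_const)
  continuous_invFun := by
    apply Continuous.subtype_mk
    exact ((continuous_fst.comp continuous_subtype_val).sub continuous_const).prodMk
      ((continuous_snd.comp continuous_subtype_val).sub continuous_const)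

/-- Step 2: a linear change of coordinates sending the conic `2yW² - Z² = c`
to the hyperbola `ab = c`, where `s` is a square root of `2y`. -/
noncomputable def keplerStep2 (y s cc : ℂ) (hy : y ≠ 0) (hs : s ^ 2 = 2 * y) (hsne : s ≠ 0) :
    {p : ℂ × ℂ // 2 * y * p.1 ^ 2 - p.2 ^ 2 = cc} ≃ₜ
    {p : ℂ × ℂ // p.1 * p.2 = cc} where
  toFun p := ⟨(s * p.1.1 - p.1.2, s * p.1.1 + p.1.2), by
    have hp := p.2
    linear_combination hp + p.1.1 ^ 2 * hs⟩
  invFun p := ⟨((p.1.1 + p.1.2) / (2 * s), (p.1.2 - p.1.1) / 2), by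
    have hp := p.2
    have h2y : (2 : ℂ) * y ≠ 0 := mul_ne_zero two_ne_zero hy
    field_simp
    ring_nf
    linear_combination 8*y*hp + (2*p.1.1*p.1.2 - p.1.1^2 - p.1.2^2 - 4*cc) * hs⟩
  left_inv p := by
    apply Subtype.ext
    apply Prod.ext <;> (simp only; field_simp; try ring)
  right_inv p := by
    apply Subtype.ext
    apply Prod.ext <;> (simp only; field_simp; try ring)
  continuous_toFun := by
    apply Continuous.subtype_mk
    exact ((continuous_const.mul (continuous_fst.comp continuous_subtype_val)).sub
        (continuous_snd.comp continuous_subtype_val)).prodMk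
      ((continuous_const.mul (continuous_fst.comp continuous_subtype_val)).add
        (continuous_snd.comp continuous_subtype_val))
  continuous_invFun := by
    apply Continuous.subtype_mk
    exact (((continuous_fst.comp continuous_subtype_val).add
        (continuous_snd.comp continuous_subtype_val)).div_const _).prodMk
      (((continuous_snd.comp continuous_subtype_val).sub
        (continuous_fst.comp continuous_subtype_val)).div_const _)

/-- Step 3: the hyperbola `ab = c` (`c ≠ 0`) projects homeomorphically to `ℂ \ {0}`. -/
noncomputable def keplerStep3 (cc : ℂ) (hcc : cc ≠ 0) :
    {p : ℂ × ℂ // p.1 * p.2 = cc} ≃ₜ {z : ℂ // z ≠ 0} where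
  toFun p := ⟨p.1.1, by
    intro h
    apply hcc
    rw [← p.2, h, zero_mul]⟩
  invFun t := ⟨(t.1, cc / t.1), by
    have h : (t : ℂ) ≠ 0 := t.2
    show (t : ℂ) * (cc / (t : ℂ)) = cc
    field_simp⟩
  left_inv p := by
    apply Subtype.ext
    apply Prod.ext
    · rfl
    · have hp := p.2
      have h1 : p.1.1 ≠ 0 := by intro h; apply hcc; rw [← hp, h, zero_mul]
      simp only
      field_simp
      linear_combination -hp
  right_inv t := rfl
  continuous_toFun := by
    apply Continuous.subtype_mk
    exact continuous_fst.comp continuous_subtype_val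
  continuous_invFun := by
    apply Continuous.subtype_mk
    refine continuous_subtype_val.prodMk (continuous_const.div continuous_subtype_val ?_)
    exact fun t => t.2

/-- Generic case of Proposition 4.2(2): if `y ≠ 0` and `1 + 2 x² y ≠ 0`, the affine
curve `2 y w² + 2 w = z² + 2 i x z` is homeomorphic to ℂ \ {0}. -/
theorem kepler_fiber_generic (x y : ℂ) (hy : y ≠ 0) (hΔ : 1 + 2 * x ^ 2 * y ≠ 0) :
    Nonempty
      ({p : ℂ × ℂ // 2 * y * p.1 ^ 2 + 2 * p.1 = p.2 ^ 2 + 2 * Complex.I * x * p.2} ≃ₜ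
        {z : ℂ // z ≠ 0}) := by
  obtain ⟨s, hs⟩ := IsAlgClosed.exists_pow_nat_eq (k := ℂ) (2 * y) (n := 2) (by norm_num)
  have h2y : (2 : ℂ) * y ≠ 0 := mul_ne_zero two_ne_zero hy
  have hsne : s ≠ 0 := fun h => h2y (by rw [← hs, h]; ring)
  have hcc : x ^ 2 + 1 / (2 * y) ≠ 0 := by
    have hkey : 2 * y * (x ^ 2 + 1 / (2 * y)) = 1 + 2 * x ^ 2 * y := by
      field_simp
      ring
    intro h
    apply hΔ
    rw [← hkey, h, mul_zero]
  exact ⟨((keplerStep1 x y hy).trans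
    (keplerStep2 y s (x ^ 2 + 1 / (2 * y)) hy hs hsne)).trans
    (keplerStep3 (x ^ 2 + 1 / (2 * y)) hcc)⟩
end
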